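/- arXiv:1502.06198 — 10 statements merged into one kernel-verified Lean document; each statement's English description precedes it below -/
import Mathlib

section
/- The affine Hermitian point set K = {(α, β) ∈ F × F : β^q + β = α^{q+1}} has exactly q³ elements. -/
/-!
Write `q = p^m` with `p` the characteristic, so that `T x = x^q + x` is additive: it is the trace
of `F` over its subfield of order `q`. Its kernel consists of roots of `X^q + X` and its image of
roots of `X^q - X`, so both have at most `q` elements; as `|ker T| * |im T| = q²`, both have exactly
`q`. Hence `im T` is the whole fixed field of `x ↦ x^q`, which contains every norm `α^(q+1)`, and
each equation `T β = α^(q+1)` has `|ker T| = q` solutions `β`.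
-/

open Polynomial

lemma ncard_setOf_pow_add_mul_eq_zero_le {R : Type*} [CommRing R] [IsDomain R] {n : ℕ}
    (hn : 2 ≤ n) (a : R) : {x : R | x ^ n + a * x = 0}.ncard ≤ n := by
  classical
  have hdeg : (C a * X).degree < (n : WithBot ℕ) :=
    (degree_C_mul_X_le a).trans_lt (by exact_mod_cast (hn : 1 < n))
  have hmonic : (X ^ n + C a * X : R[X]).Monic := monic_X_pow_add hdeg
  have hroots : {x : R | x ^ n + a * x = 0} = ((X ^ n + C a * X).roots.toFinset : Set R) := by
    ext x
    simp [mem_roots hmonic.ne_zero]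
  rw [hroots, Set.ncard_coe_finset]
  calc _ ≤ Multiset.card (X ^ n + C a * X).roots := Multiset.toFinset_card_le _
    _ ≤ (X ^ n + C a * X).natDegree := card_roots' _
    _ = n := by
      rw [natDegree_add_eq_left_of_degree_lt (hdeg.trans_eq (degree_X_pow n).symm), natDegree_X_pow]

lemma AddMonoidHom.card_ker_eq_and_card_range_eq_of_le {G H : Type*} [AddGroup G] [AddGroup H]
    [Finite G] (f : G →+ H) {k l : ℕ} (hk : Nat.card f.ker ≤ k) (hl : Nat.card f.range ≤ l)
    (hG : Nat.card G = k * l) : Nat.card f.ker = k ∧ Nat.card f.range = l := by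
  have hcard : Nat.card f.ker * Nat.card f.range = k * l := by
    rw [← AddSubgroup.index_ker, AddSubgroup.card_mul_index, hG]
  have hpos : 0 < k * l := hG ▸ Nat.card_pos
  constructor <;> nlinarith [Nat.pos_of_mul_pos_left hpos, Nat.pos_of_mul_pos_right hpos]

lemma AddMonoidHom.card_fiber_eq_card_ker {G H : Type*} [AddGroup G] [AddGroup H] (f : G →+ H)
    {y : H} (hy : y ∈ f.range) : Nat.card (f ⁻¹' {y}) = Nat.card f.ker := by
  obtain ⟨x, rfl⟩ := hy
  exact Nat.card_congr (f.fiberEquivKer x)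

lemma FiniteField.exists_eq_ringChar_pow_of_dvd_card {F : Type*} [Field F] [Fintype F] {q : ℕ}
    (hq : q ∣ Fintype.card F) : ∃ m, q = ringChar F ^ m := by
  obtain ⟨n, hp, hcard⟩ := FiniteField.card F (ringChar F)
  obtain ⟨m, -, rfl⟩ := (Nat.dvd_prime_pow hp).mp (hcard ▸ hq)
  exact ⟨m, rfl⟩

section Trace

variable {F : Type*} [Field F] {p m : ℕ} [ExpChar F p]

variable (F p m) in
def traceHom : F →+ F := (iterateFrobenius F p m).toAddMonoidHom + AddMonoidHom.id F

@[simp]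
lemma traceHom_apply (x : F) : traceHom F p m x = x ^ p ^ m + x := rfl

lemma card_ker_traceHom_le (hq : 2 ≤ p ^ m) : Nat.card (traceHom F p m).ker ≤ p ^ m := by
  have hker : ((traceHom F p m).ker : Set F) = {x | x ^ p ^ m + 1 * x = 0} := by
    ext x
    simp
  rw [← SetLike.coe_sort_coe, Nat.card_coe_set_eq, hker]
  exact ncard_setOf_pow_add_mul_eq_zero_le hq 1

variable [Fintype F]

lemma range_traceHom_subset (hF : Fintype.card F = (p ^ m) ^ 2) :
    ((traceHom F p m).range : Set F) ⊆ {y | y ^ p ^ m = y} := by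
  rintro _ ⟨x, rfl⟩
  rw [Set.mem_ofPred_eq, traceHom_apply, add_pow_expChar_pow, ← pow_mul, ← sq, ← hF,
    FiniteField.pow_card, add_comm]

lemma card_ker_traceHom_eq_and_range_traceHom_eq (hF : Fintype.card F = (p ^ m) ^ 2) :
    Nat.card (traceHom F p m).ker = p ^ m ∧
      ((traceHom F p m).range : Set F) = {y | y ^ p ^ m = y} := by
  have hq : 2 ≤ p ^ m := (one_lt_pow_iff two_ne_zero).mp (hF ▸ Fintype.one_lt_card)
  have hfixed : {y : F | y ^ p ^ m = y}.ncard ≤ p ^ m := by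
    have hroots : {y : F | y ^ p ^ m = y} = {x | x ^ p ^ m + -1 * x = 0} := by
      ext y
      rw [Set.mem_ofPred_eq, Set.mem_ofPred_eq, neg_one_mul, ← sub_eq_add_neg, sub_eq_zero]
    rw [hroots]
    exact ncard_setOf_pow_add_mul_eq_zero_le hq (-1)
  have hrange_le : Nat.card (traceHom F p m).range ≤ p ^ m := by
    rw [← SetLike.coe_sort_coe, Nat.card_coe_set_eq]
    exact (Set.ncard_le_ncard (range_traceHom_subset hF)).trans hfixed
  obtain ⟨hker, hrange⟩ := (traceHom F p m).card_ker_eq_and_card_range_eq_of_le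
    (card_ker_traceHom_le hq) hrange_le (by rw [Nat.card_eq_fintype_card, hF, sq])
  refine ⟨hker, Set.eq_of_subset_of_ncard_le (range_traceHom_subset hF) ?_⟩
  rw [← SetLike.coe_sort_coe, Nat.card_coe_set_eq] at hrange
  rwa [hrange]

end Trace

theorem stmt_1_general (q : ℕ) (F : Type*) [Field F] [Fintype F]
    (hF : Fintype.card F = q ^ 2) :
    {p : F × F | p.2 ^ q + p.2 = p.1 ^ (q + 1)}.ncard = q ^ 3 := by
  obtain ⟨m, rfl⟩ := FiniteField.exists_eq_ringChar_pow_of_dvd_card (Dvd.intro_left _ hF.symm)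
  have : Fact (ringChar F).Prime := ⟨CharP.char_is_prime F _⟩
  obtain ⟨hker, hrange⟩ := card_ker_traceHom_eq_and_range_traceHom_eq hF
  have hfiber (α : F) : Nat.card {β : F // β ^ ringChar F ^ m + β = α ^ (ringChar F ^ m + 1)} =
      ringChar F ^ m := by
    have hα : α ^ (ringChar F ^ m + 1) ∈ (traceHom F (ringChar F) m).range := by
      rw [← SetLike.mem_coe, hrange, Set.mem_ofPred_eq, ← pow_mul, add_mul, one_mul, ← sq, pow_add,
        ← hF, FiniteField.pow_card, pow_succ, mul_comm]
    exact ((traceHom F (ringChar F) m).card_fiber_eq_card_ker hα).trans hker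
  rw [← Nat.card_coe_set_eq, Set.coe_ofPred, Nat.card_congr (Equiv.subtypeProdEquivSigmaSubtype
    fun (α β : F) => β ^ ringChar F ^ m + β = α ^ (ringChar F ^ m + 1)), Nat.card_sigma]
  simp only [hfiber, Finset.sum_const, Finset.card_univ, hF, smul_eq_mul]
  ring

/-- The affine Hermitian point set `K = {(α, β) ∈ F × F : β^q + β = α^(q+1)}` has exactly
`q³` elements, where `F` is the finite field with `q²` elements and `q` is a prime power. -/
theorem stmt_1 (q : ℕ) (hq : IsPrimePow q) (F : Type*) [Field F] [Fintype F]
    (hF : Fintype.card F = q ^ 2) :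
    {p : F × F | p.2 ^ q + p.2 = p.1 ^ (q + 1)}.ncard = q ^ 3 :=
  stmt_1_general q F hF
end

section
/- Let (α, β) ∈ K, let γ ∈ F satisfy γ^q + γ ≠ 0, let δ ∈ F satisfy δ^{q+1} = γ^q + γ (so necessarily δ ≠ 0), and let ζ ∈ F be a primitive (q+1)-st root of unity. Then {(x, y) ∈ K : y − β − α^q·(x − α) = γ} = {(α + δζ^i, β + γ + α^q·δζ^i) : 0 ≤ i ≤ q}, and this set has exactly q + 1 elements. -/
/-! Since `q ∣ |F| = q²`, `x ↦ x ^ q` is an additive involution of `F`. Writing a point of the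
line `τ_{α,β} = γ` as `(α + t, β + γ + α ^ q t)` and expanding the curve equation with it, the
hypothesis `(α, β) ∈ K` cancels everything except `t ^ (q + 1) = γ ^ q + γ = δ ^ (q + 1)`, whose
`q + 1` solutions are the `δ ζ ^ i`. -/

theorem FiniteField.add_pow_of_dvd_card {F : Type*} [Field F] [Fintype F] {q : ℕ}
    (hq : q ∣ Fintype.card F) (x y : F) : (x + y) ^ q = x ^ q + y ^ q := by
  obtain ⟨n, hp, hcard⟩ := FiniteField.card F (ringChar F)
  have : Fact (ringChar F).Prime := ⟨hp⟩
  obtain ⟨k, -, rfl⟩ := (Nat.dvd_prime_pow hp).1 (hcard ▸ hq)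
  exact add_pow_char_pow x y _ _

theorem FiniteField.pow_pow_of_card_eq_sq {F : Type*} [Field F] [Fintype F] {q : ℕ}
    (hF : Fintype.card F = q ^ 2) (x : F) : (x ^ q) ^ q = x := by
  rw [← pow_mul, ← sq, ← hF, FiniteField.pow_card]

namespace IsPrimitiveRoot

variable {K : Type*} [Field K] {k : ℕ} {ζ δ : K}

theorem setOf_pow_eq_pow (hζ : IsPrimitiveRoot ζ k) (hk : 0 < k) :
    {t : K | t ^ k = δ ^ k} = (fun i => δ * ζ ^ i) '' Set.Iio k := by
  ext t
  rw [Set.mem_ofPred_eq, ← Polynomial.mem_nthRoots hk, hζ.nthRoots_eq rfl]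
  simp [mul_comm]

theorem ncard_setOf_pow_eq_pow (hζ : IsPrimitiveRoot ζ k) (hk : 0 < k) (hδ : δ ≠ 0) :
    {t : K | t ^ k = δ ^ k}.ncard = k := by
  have hinj : Set.InjOn (fun i => δ * ζ ^ i) (Set.Iio k) := by
    simpa [mul_comm] using hζ.injOn_pow_mul hδ
  rw [hζ.setOf_pow_eq_pow hk, hinj.ncard_image, Set.ncard_Iio_nat]

end IsPrimitiveRoot

section HermitianCurve

variable {F : Type*} [CommRing F] {q : ℕ} {α β : F}

theorem hermitian_tangent_shift_iff (hadd : ∀ x y : F, (x + y) ^ q = x ^ q + y ^ q)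
    (hinv : ∀ x : F, (x ^ q) ^ q = x) (hK : β ^ q + β = α ^ (q + 1)) (γ t : F) :
    (β + γ + α ^ q * t) ^ q + (β + γ + α ^ q * t) = (α + t) ^ (q + 1) ↔
      t ^ (q + 1) = γ ^ q + γ := by
  have expand_y : (β + γ + α ^ q * t) ^ q = β ^ q + γ ^ q + α * t ^ q := by
    rw [hadd, hadd, mul_pow, hinv]
  have expand_x : (α + t) ^ (q + 1) = (α ^ q + t ^ q) * (α + t) := by
    rw [pow_succ, hadd]
  rw [expand_y, expand_x, pow_succ]
  rw [pow_succ] at hK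
  constructor <;> intro h <;> linear_combination hK - h

theorem setOf_hermitian_line_eq_image (hadd : ∀ x y : F, (x + y) ^ q = x ^ q + y ^ q)
    (hinv : ∀ x : F, (x ^ q) ^ q = x) (hK : β ^ q + β = α ^ (q + 1)) (γ : F) :
    {p : F × F | p.2 ^ q + p.2 = p.1 ^ (q + 1) ∧ p.2 - β - α ^ q * (p.1 - α) = γ} =
      (fun t => (α + t, β + γ + α ^ q * t)) '' {t | t ^ (q + 1) = γ ^ q + γ} := by
  ext ⟨x, y⟩
  simp only [Set.mem_ofPred_eq, Set.mem_image, Prod.mk.injEq]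
  constructor
  · rintro ⟨hcurve, hline⟩
    have hy : y = β + γ + α ^ q * (x - α) := by linear_combination hline
    refine ⟨x - α, ?_, by ring, hy.symm⟩
    rw [← hermitian_tangent_shift_iff hadd hinv hK, ← hy, add_sub_cancel]
    exact hcurve
  · rintro ⟨t, ht, rfl, rfl⟩
    exact ⟨(hermitian_tangent_shift_iff hadd hinv hK γ t).2 ht, by ring⟩

end HermitianCurve

theorem stmt_4_general (q : ℕ) (F : Type*) [Field F] [Fintype F]
    (hF : Fintype.card F = q ^ 2) (α β γ δ ζ : F)
    (hK : β ^ q + β = α ^ (q + 1)) (hγ : γ ^ q + γ ≠ 0)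
    (hδ : δ ^ (q + 1) = γ ^ q + γ) (hζ : IsPrimitiveRoot ζ (q + 1)) :
    {p : F × F | p.2 ^ q + p.2 = p.1 ^ (q + 1) ∧ p.2 - β - α ^ q * (p.1 - α) = γ}
        = (fun i : ℕ => (α + δ * ζ ^ i, β + γ + α ^ q * (δ * ζ ^ i))) '' Set.Iic q ∧
      {p : F × F | p.2 ^ q + p.2 = p.1 ^ (q + 1) ∧ p.2 - β - α ^ q * (p.1 - α) = γ}.ncard
        = q + 1 := by
  have hadd := FiniteField.add_pow_of_dvd_card (hF ▸ dvd_pow_self q two_ne_zero)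
  have hline := setOf_hermitian_line_eq_image hadd (FiniteField.pow_pow_of_card_eq_sq hF) hK γ
  rw [← hδ] at hline
  have hδ0 : δ ≠ 0 := by
    rintro rfl
    exact hγ (by rw [← hδ, zero_pow q.succ_ne_zero])
  have hpar : Function.Injective fun t : F => (α + t, β + γ + α ^ q * t) :=
    fun s t h => add_left_cancel (Prod.ext_iff.1 h).1
  constructor
  · rw [hline, hζ.setOf_pow_eq_pow q.succ_pos, Set.image_image, Set.Iio_add_one_eq_Iic]
  · rw [hline, Set.ncard_image_of_injective _ hpar, hζ.ncard_setOf_pow_eq_pow q.succ_pos hδ0]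

/-- Let `(α, β) ∈ K`, let `γ ∈ F` satisfy `γ^q + γ ≠ 0`, let `δ ∈ F` satisfy
`δ^(q+1) = γ^q + γ`, and let `ζ ∈ F` be a primitive `(q+1)`-st root of unity. Then the set of
points of `K` on the line `τ_{α,β} − γ` is `{(α + δζ^i, β + γ + α^q δζ^i) : 0 ≤ i ≤ q}`,
and this set has exactly `q + 1` elements. -/
theorem stmt_4 (q : ℕ) (hq : IsPrimePow q) (F : Type*) [Field F] [Fintype F]
    (hF : Fintype.card F = q ^ 2) (α β γ δ ζ : F)
    (hK : β ^ q + β = α ^ (q + 1)) (hγ : γ ^ q + γ ≠ 0)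
    (hδ : δ ^ (q + 1) = γ ^ q + γ) (hζ : IsPrimitiveRoot ζ (q + 1)) :
    {p : F × F | p.2 ^ q + p.2 = p.1 ^ (q + 1) ∧ p.2 - β - α ^ q * (p.1 - α) = γ}
        = (fun i : ℕ => (α + δ * ζ ^ i, β + γ + α ^ q * (δ * ζ ^ i))) '' Set.Iic q ∧
      {p : F × F | p.2 ^ q + p.2 = p.1 ^ (q + 1) ∧ p.2 - β - α ^ q * (p.1 - α) = γ}.ncard
        = q + 1 :=
  stmt_4_general q F hF α β γ δ ζ hK hγ hδ hζ
end

section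
/- Let b, c ∈ F, let δ ∈ F satisfy δ^{q+1} = b^{q+1} − (c^q + c), and let ζ ∈ F be a primitive (q+1)-st root of unity. Then the set of points of K on the line y + bx + c, namely {(x, y) ∈ K : y + bx + c = 0}, equals {(−b^q + δζ^i, b^{q+1} − c − b·δζ^i) : 0 ≤ i ≤ q}. -/
/-! Since `q` divides `|F| = q²`, it is a power of the characteristic, so `σ x = x ^ q` is a ring
endomorphism of `F`, and an involution because `x ^ q² = x`. Substituting `y = -b x - c` into
`σ y + y = x σ x` and completing the product gives `N (x + σ b) = N b - (σ c + c)` for the norm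
`N u = u σ u = u ^ (q + 1)`. So the points of `K` on the line are parametrised by the solutions `u`
of `u ^ (q + 1) = δ ^ (q + 1)`, which are exactly the `δ ζ ^ i` with `i ≤ q`. -/

theorem FiniteField.exists_ringHom_eq_pow_of_dvd_card {F : Type*} [Field F] [Fintype F] {q : ℕ}
    (hq : q ∣ Fintype.card F) : ∃ σ : F →+* F, ∀ x, σ x = x ^ q := by
  obtain ⟨p, hp⟩ := CharP.exists F
  have hp_prime : p.Prime := CharP.char_is_prime F p
  obtain ⟨n, -, hcard⟩ := FiniteField.card F p
  rw [hcard] at hq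
  obtain ⟨i, -, rfl⟩ := (Nat.dvd_prime_pow hp_prime).1 hq
  have := Fact.mk hp_prime
  exact ⟨iterateFrobenius F p i, fun x => iterateFrobenius_def p i x⟩

theorem pow_add_self_eq_pow_succ_iff_of_add_mul_add_eq_zero {R : Type*} [CommRing R] {q : ℕ}
    (σ : R →+* R) (hσ : ∀ x, σ x = x ^ q) (hσσ : ∀ x, σ (σ x) = x) {x y b c : R} (hy : y + b * x + c = 0) :
    y ^ q + y = x ^ (q + 1) ↔ (x + b ^ q) ^ (q + 1) = b ^ (q + 1) - (c ^ q + c) := by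
  have hy' : y = -(b * x) - c := by linear_combination hy
  have hyq : y ^ q = -(b ^ q * x ^ q) - c ^ q := by
    simp only [← hσ, hy', map_sub, map_neg, map_mul]
  have hconj : (x + b ^ q) ^ q = x ^ q + b := by
    rw [← hσ b, ← hσ (x + σ b), map_add, hσσ, hσ]
  rw [pow_succ (x + b ^ q), hconj, hyq]
  constructor <;> intro h <;> linear_combination hy - h

theorem IsPrimitiveRoot.pow_eq_pow_iff_exists_eq_mul_pow {K : Type*} [Field K] {n : ℕ} [NeZero n]
    {ζ : K} (hζ : IsPrimitiveRoot ζ n) {u δ : K} : u ^ n = δ ^ n ↔ ∃ i < n, u = δ * ζ ^ i := by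
  constructor
  · intro h
    by_cases hδ : δ = 0
    · subst hδ
      exact ⟨0, NeZero.pos n, by simpa [NeZero.ne n] using h⟩
    · obtain ⟨i, hi, hζi⟩ := hζ.eq_pow_of_pow_eq_one (ξ := u / δ) <| by
        rw [div_pow, h, div_self (pow_ne_zero n hδ)]
      exact ⟨i, hi, by rw [hζi, mul_div_cancel₀ u hδ]⟩
  · rintro ⟨i, -, rfl⟩
    rw [mul_pow, ← pow_mul, mul_comm i n, pow_mul, hζ.pow_eq_one, one_pow, mul_one]

theorem stmt_5_general (q : ℕ) (F : Type*) [Field F] [Fintype F]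
    (hF : Fintype.card F = q ^ 2) (b c δ ζ : F)
    (hδ : δ ^ (q + 1) = b ^ (q + 1) - (c ^ q + c)) (hζ : IsPrimitiveRoot ζ (q + 1)) :
    {p : F × F | p.2 ^ q + p.2 = p.1 ^ (q + 1) ∧ p.2 + b * p.1 + c = 0}
      = (fun i : ℕ => (-b ^ q + δ * ζ ^ i, b ^ (q + 1) - c - b * (δ * ζ ^ i))) '' Set.Iic q := by
  obtain ⟨σ, hσ⟩ := FiniteField.exists_ringHom_eq_pow_of_dvd_card (hF ▸ dvd_pow_self q two_ne_zero)
  have hσσ : ∀ x, σ (σ x) = x := fun x => by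
    rw [hσ, hσ, ← pow_mul, ← sq, ← hF, FiniteField.pow_card]
  ext ⟨x, y⟩
  simp only [Set.mem_ofPred_eq, Set.mem_image, Set.mem_Iic, Prod.mk.injEq]
  rw [and_congr_left (pow_add_self_eq_pow_succ_iff_of_add_mul_add_eq_zero σ hσ hσσ), ← hδ,
    hζ.pow_eq_pow_iff_exists_eq_mul_pow]
  constructor
  · rintro ⟨⟨i, hi, hx⟩, hy⟩
    exact ⟨i, Nat.lt_succ_iff.mp hi, by linear_combination -hx, by linear_combination b * hx - hy⟩
  · rintro ⟨i, hi, rfl, rfl⟩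
    exact ⟨⟨i, Nat.lt_succ_iff.mpr hi, by ring⟩, by ring⟩

/-- Let `b, c ∈ F`, let `δ ∈ F` satisfy `δ^(q+1) = b^(q+1) − (c^q + c)`, and let `ζ ∈ F` be a
primitive `(q+1)`-st root of unity. Then the set of points of `K` on the line `y + bx + c`
equals `{(−b^q + δζ^i, b^(q+1) − c − b δζ^i) : 0 ≤ i ≤ q}`. -/
theorem stmt_5 (q : ℕ) (hq : IsPrimePow q) (F : Type*) [Field F] [Fintype F]
    (hF : Fintype.card F = q ^ 2) (b c δ ζ : F)
    (hδ : δ ^ (q + 1) = b ^ (q + 1) - (c ^ q + c)) (hζ : IsPrimitiveRoot ζ (q + 1)) :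
    {p : F × F | p.2 ^ q + p.2 = p.1 ^ (q + 1) ∧ p.2 + b * p.1 + c = 0}
      = (fun i : ℕ => (-b ^ q + δ * ζ ^ i, b ^ (q + 1) - c - b * (δ * ζ ^ i))) '' Set.Iic q :=
  stmt_5_general q F hF b c δ ζ hδ hζ
end

section
/- Let b, c ∈ F. The set {(x, y) ∈ K : y + bx + c = 0} has exactly one element if and only if c^q + c = b^{q+1} (equivalently, if and only if (−b, c) ∈ K); and if c^q + c ≠ b^{q+1}, then this set has exactly q + 1 elements. -/
/-!
Let `σ x = x ^ q`, an involutive ring endomorphism of `F`. Substituting `y = -b x - c` into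
`σ y + y = x σ x` and putting `z = x + σ b` turns the curve equation into the norm equation
`z σ z = d` with `d = b σ b - σ c - c`, which is `σ`-fixed. The norm `z ↦ z ^ (q + 1)` vanishes
only at `0`, and on the cyclic group `Fˣ` of order `(q + 1)(q - 1)` it maps onto the solutions of
`d ^ (q - 1) = 1` with fibres the cosets of the `(q + 1)`-st roots of unity.
-/

namespace IsCyclic

open scoped Pointwise

variable {G : Type*} [CommGroup G] [IsCyclic G] [Finite G] {n m : ℕ}

theorem range_powMonoidHom_eq_ker (h : Nat.card G = n * m) :
    (powMonoidHom n : G →* G).range = (powMonoidHom m).ker := by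
  have hn : n ≠ 0 := by
    rintro rfl
    exact Nat.card_pos.ne' (h.trans (zero_mul m))
  refine Subgroup.eq_of_le_of_card_ge ?_ ?_
  · rintro _ ⟨b, rfl⟩
    simp [← pow_mul, ← h, pow_card_eq_one']
  · rw [card_powMonoidHom_ker, card_powMonoidHom_range, h, Nat.gcd_mul_left_left,
      Nat.gcd_mul_right_left, Nat.mul_div_cancel_left _ (Nat.pos_of_ne_zero hn)]

theorem ncard_pow_eq (h : Nat.card G = n * m) {a : G} (ha : a ^ m = 1) :
    {b : G | b ^ n = a}.ncard = n := by
  obtain ⟨b₀, rfl : b₀ ^ n = a⟩ : a ∈ (powMonoidHom n : G →* G).range := by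
    rw [range_powMonoidHom_eq_ker h]
    exact ha
  have hfiber : {b : G | b ^ n = b₀ ^ n} = b₀ • ((powMonoidHom n : G →* G).ker : Set G) := by
    ext b
    simp only [Set.mem_ofPred_eq, Set.mem_smul_set_iff_inv_smul_mem, smul_eq_mul, SetLike.mem_coe,
      MonoidHom.mem_ker, powMonoidHom_apply, mul_pow, inv_pow, inv_mul_eq_one, eq_comm]
  rw [hfiber, Set.ncard_smul_set, ← Nat.card_coe_set_eq, SetLike.coe_sort_coe,
    card_powMonoidHom_ker, h, Nat.gcd_mul_right_left]

end IsCyclic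

namespace FiniteField

variable {F : Type*} [Field F] [Fintype F] {q : ℕ}

theorem one_lt_of_card_eq_sq (hF : Fintype.card F = q ^ 2) : 1 < q := by
  have h := hF ▸ Fintype.one_lt_card (α := F)
  by_contra! hq
  interval_cases q <;> simp at h

theorem exists_ringHom_eq_pow_of_dvd_card_s6 (h : q ∣ Fintype.card F) :
    ∃ φ : F →+* F, ∀ x, φ x = x ^ q := by
  obtain ⟨n, hp, hcard⟩ := FiniteField.card F (ringChar F)
  rw [hcard] at h
  obtain ⟨k, -, rfl⟩ := (Nat.dvd_prime_pow hp).mp h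
  have := ExpChar.prime (R := F) hp
  exact ⟨iterateFrobenius F (ringChar F) k, iterateFrobenius_def _ _⟩

theorem ncard_pow_succ_eq (hF : Fintype.card F = q ^ 2) {d : F} (hd : d ≠ 0) (hdq : d ^ q = d) :
    {z : F | z ^ (q + 1) = d}.ncard = q + 1 := by
  have hunits : Nat.card Fˣ = (q + 1) * (q - 1) := by
    rw [Nat.card_units, Nat.card_eq_fintype_card, hF, ← one_pow 2, Nat.sq_sub_sq, one_pow]
  have hd' : (Units.mk0 d hd) ^ (q - 1) = 1 := by
    ext
    rw [Units.val_pow_eq_pow_val, Units.val_mk0, pow_sub₀ d hd (one_lt_of_card_eq_sq hF).le,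
      hdq, pow_one, mul_inv_cancel₀ hd, Units.val_one]
  have hset : {z : F | z ^ (q + 1) = d} = Units.val '' {u : Fˣ | u ^ (q + 1) = Units.mk0 d hd} := by
    ext z
    constructor
    · intro hz
      have hz0 : z ≠ 0 := by
        rintro rfl
        exact hd (by simpa using hz.symm)
      exact ⟨Units.mk0 z hz0, Units.ext hz, rfl⟩
    · rintro ⟨u, hu, rfl⟩
      simpa using congrArg Units.val hu
  rw [hset, Set.ncard_image_of_injective _ Units.val_injective,
    IsCyclic.ncard_pow_eq hunits hd']

end FiniteField

section Hermitian

variable {R : Type*} [CommRing R] (σ : R →+* R)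

theorem hermitian_line_eq_image (hσ : ∀ x, σ (σ x) = x) (b c : R) :
    {p : R × R | σ p.2 + p.2 = p.1 * σ p.1 ∧ p.2 + b * p.1 + c = 0}
      = (fun z => (z - σ b, -(b * (z - σ b)) - c)) '' {z | z * σ z = b * σ b - σ c - c} := by
  ext ⟨x, y⟩
  simp only [Set.mem_ofPred_eq, Set.mem_image, Prod.mk.injEq]
  constructor
  · rintro ⟨hK, hL⟩
    obtain rfl : y = -(b * x) - c := by linear_combination hL
    refine ⟨x + σ b, ?_, by ring, by ring⟩
    simp only [map_add, map_sub, map_neg, map_mul, hσ] at hK ⊢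
    linear_combination -hK
  · rintro ⟨z, hz, rfl, rfl⟩
    refine ⟨?_, by ring⟩
    simp only [map_sub, map_neg, map_mul, hσ] at hz ⊢
    linear_combination -hz

theorem ncard_hermitian_line (hσ : ∀ x, σ (σ x) = x) (b c : R) :
    {p : R × R | σ p.2 + p.2 = p.1 * σ p.1 ∧ p.2 + b * p.1 + c = 0}.ncard
      = {z | z * σ z = b * σ b - σ c - c}.ncard := by
  rw [hermitian_line_eq_image σ hσ, Set.ncard_image_of_injective]
  intro z w h
  simpa using congrArg Prod.fst h

end Hermitian

theorem stmt_6_general (q : ℕ) (F : Type*) [Field F] [Fintype F]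
    (hF : Fintype.card F = q ^ 2) (b c : F) :
    ({p : F × F | p.2 ^ q + p.2 = p.1 ^ (q + 1) ∧ p.2 + b * p.1 + c = 0}.ncard = 1
        ↔ c ^ q + c = b ^ (q + 1)) ∧
      (c ^ q + c ≠ b ^ (q + 1) →
        {p : F × F | p.2 ^ q + p.2 = p.1 ^ (q + 1) ∧ p.2 + b * p.1 + c = 0}.ncard = q + 1) := by
  obtain ⟨φ, hφ⟩ := FiniteField.exists_ringHom_eq_pow_of_dvd_card_s6 (hF ▸ dvd_pow_self q two_ne_zero)
  have hφφ (x : F) : φ (φ x) = x := by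
    rw [hφ, hφ, ← pow_mul, ← sq, ← hF, FiniteField.pow_card]
  have hcount : {p : F × F | p.2 ^ q + p.2 = p.1 ^ (q + 1) ∧ p.2 + b * p.1 + c = 0}.ncard
      = {z : F | z ^ (q + 1) = b ^ (q + 1) - c ^ q - c}.ncard := by
    simpa only [hφ, ← pow_succ'] using ncard_hermitian_line φ hφφ b c
  rw [hcount]
  rcases eq_or_ne (c ^ q + c) (b ^ (q + 1)) with h | h
  · have hzero : {z : F | z ^ (q + 1) = b ^ (q + 1) - c ^ q - c} = {0} := by
      ext z
      simp [← h]
    simp [hzero, h]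
  · have hd : b ^ (q + 1) - c ^ q - c ≠ 0 := by
      rw [sub_sub, sub_ne_zero]
      exact h.symm
    have hdq : (b ^ (q + 1) - c ^ q - c) ^ q = b ^ (q + 1) - c ^ q - c := by
      simp only [pow_succ', ← hφ, map_sub, map_mul, hφφ]
      ring
    rw [FiniteField.ncard_pow_succ_eq hF hd hdq]
    have := FiniteField.one_lt_of_card_eq_sq hF
    simp only [h, iff_false, ne_eq, not_false_eq_true, forall_const, and_true]
    omega

/-- Let `b, c ∈ F`. The set of points of `K` on the line `y + bx + c` has exactly one element
if and only if `c^q + c = b^(q+1)`; and if `c^q + c ≠ b^(q+1)`, then this set has exactly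
`q + 1` elements. -/
theorem stmt_6 (q : ℕ) (hq : IsPrimePow q) (F : Type*) [Field F] [Fintype F]
    (hF : Fintype.card F = q ^ 2) (b c : F) :
    ({p : F × F | p.2 ^ q + p.2 = p.1 ^ (q + 1) ∧ p.2 + b * p.1 + c = 0}.ncard = 1
        ↔ c ^ q + c = b ^ (q + 1)) ∧
      (c ^ q + c ≠ b ^ (q + 1) →
        {p : F × F | p.2 ^ q + p.2 = p.1 ^ (q + 1) ∧ p.2 + b * p.1 + c = 0}.ncard = q + 1) :=
  stmt_6_general q F hF b c
end

section
/- Let a ∈ F satisfy a^q = a. Then the polynomial Y^q + Y − a ∈ F[Y] has exactly q distinct roots in F, and it factors over F as the product of (Y − d) over these q roots d. -/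
/-!
Write `P = Y^q + Y - a`. Since `q` is a power of the characteristic and `a^q = a`, Frobenius gives
`P^q = Y^(q^2) + Y^q - a`, so `P^q - P = Y^(q^2) - Y`. Hence `P` divides `Y^(q^2) - Y`, which
splits over `F` because `|F| = q^2`, so `P` splits too. Its derivative is `q Y^(q-1) + 1 = 1`,
so `P` is separable, and its `q = deg P` roots are distinct.
-/

open Polynomial

namespace Polynomial

section CommRing

variable {R : Type*} [CommRing R]

lemma separable_X_pow_add_X_sub_C {q : ℕ} (hq : (q : R) = 0) (a : R) :
    (X ^ q + X - C a : R[X]).Separable := by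
  have hderiv : derivative (X ^ q + X - C a : R[X]) = 1 := by
    simp [derivative_X_pow, hq]
  rw [separable_def, hderiv]
  exact isCoprime_one_right

lemma monic_X_pow_add_X_sub_C {q : ℕ} (hq : 1 < q) (a : R) : (X ^ q + X - C a : R[X]).Monic := by
  rw [add_sub_assoc]
  exact monic_X_pow_add ((degree_X_sub_C_le a).trans_lt (by exact_mod_cast hq))

lemma natDegree_X_pow_add_X_sub_C [Nontrivial R] {q : ℕ} (hq : 1 < q) (a : R) :
    (X ^ q + X - C a : R[X]).natDegree = q := by
  rw [add_sub_assoc, natDegree_add_eq_left_of_natDegree_lt] <;>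
    rw [natDegree_X_pow]
  exact (natDegree_X_sub_C_le a).trans_lt hq

lemma X_pow_add_X_sub_C_pow_sub_self {p : ℕ} [ExpChar R p] {n : ℕ} {a : R}
    (ha : a ^ p ^ n = a) :
    (X ^ p ^ n + X - C a : R[X]) ^ p ^ n - (X ^ p ^ n + X - C a) = X ^ (p ^ n) ^ 2 - X := by
  rw [sub_pow_expChar_pow, add_pow_expChar_pow, ← pow_mul, ← sq, ← C_pow, ha]
  ring

lemma X_pow_add_X_sub_C_dvd {p : ℕ} [ExpChar R p] {n : ℕ} {a : R} (ha : a ^ p ^ n = a) :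
    (X ^ p ^ n + X - C a : R[X]) ∣ X ^ (p ^ n) ^ 2 - X :=
  X_pow_add_X_sub_C_pow_sub_self ha ▸
    dvd_sub (dvd_pow_self _ (pow_ne_zero n (expChar_pos R p).ne')) dvd_rfl

end CommRing

section Field

variable {K : Type*} [Field K] [DecidableEq K] {f : K[X]}

lemma Separable.card_roots_toFinset_of_splits (hs : f.Separable) (hf : f.Splits) :
    f.roots.toFinset.card = f.natDegree := by
  rw [Multiset.toFinset_card_of_nodup (nodup_roots hs), ← splits_iff_card_roots.mp hf]

lemma Separable.eq_prod_roots_toFinset_of_monic_of_splits (hs : f.Separable) (hm : f.Monic)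
    (hf : f.Splits) : f = ∏ d ∈ f.roots.toFinset, (X - C d) := by
  rw [Finset.prod_eq_multiset_prod, Multiset.toFinset_val,
    Multiset.dedup_eq_self.mpr (nodup_roots hs)]
  exact hf.eq_prod_roots_of_monic hm

end Field

end Polynomial

lemma FiniteField.splits_of_dvd_X_pow_card_sub_X {K : Type*} [Field K] [Fintype K] {f : K[X]}
    (h : f ∣ X ^ Fintype.card K - X) : f.Splits := by
  have hsplits : (X ^ Fintype.card K - X : K[X]).Splits := by
    rw [splits_iff_card_roots, FiniteField.roots_X_pow_card_sub_X,
      FiniteField.X_pow_card_sub_X_natDegree_eq K Fintype.one_lt_card]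
    rfl
  exact hsplits.of_dvd (FiniteField.X_pow_card_sub_X_ne_zero K Fintype.one_lt_card) h

/-- Let `a ∈ F` satisfy `a^q = a`. Then the polynomial `Y^q + Y − a ∈ F[Y]` has exactly `q`
distinct roots in `F`, and it factors over `F` as the product of `(Y − d)` over these roots. -/
theorem stmt_8 (q : ℕ) (hq : IsPrimePow q) (F : Type*) [Field F] [Fintype F] [DecidableEq F]
    (hF : Fintype.card F = q ^ 2) (a : F) (ha : a ^ q = a) :
    (X ^ q + X - C a : F[X]).roots.toFinset.card = q ∧
      (X ^ q + X - C a : F[X])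
        = ∏ d ∈ (X ^ q + X - C a : F[X]).roots.toFinset, (X - C d) := by
  obtain ⟨p, k, hp, hk, rfl⟩ := hq
  have : Fact p.Prime := ⟨hp.nat_prime⟩
  have : CharP F p := charP_of_card_eq_prime_pow (by rw [hF, ← pow_mul])
  have hq : 1 < p ^ k := Nat.one_lt_pow hk.ne' hp.nat_prime.one_lt
  have hsplits : (X ^ p ^ k + X - C a : F[X]).Splits :=
    FiniteField.splits_of_dvd_X_pow_card_sub_X (hF ▸ X_pow_add_X_sub_C_dvd ha)
  have hsep : (X ^ p ^ k + X - C a : F[X]).Separable :=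
    separable_X_pow_add_X_sub_C (by simp [hk.ne']) a
  exact ⟨(hsep.card_roots_toFinset_of_splits hsplits).trans (natDegree_X_pow_add_X_sub_C hq a),
    hsep.eq_prod_roots_toFinset_of_monic_of_splits (monic_X_pow_add_X_sub_C hq a) hsplits⟩
end

section
/- Let (a, b) ∈ K and let m ∈ F with m ≠ a^q. Then the set of points of K on the line through (a, b) with slope m, namely {(x, y) ∈ K : y = b + m·(x − a)}, has exactly q + 1 elements. Moreover, if m₁, m₂ ∈ F are distinct with m₁ ≠ a^q and m₂ ≠ a^q, then the intersection of the two corresponding point sets of K is exactly {(a, b)}. -/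
/-!
Since `#F = q²`, the map `σ x = x ^ q` is an involutive ring automorphism of `F`, and `K` is the
locus `σ y + y = σ x * x`. On the line `y = b + m (x - a)` through a point `(a, b)` of `K`, this
equation completes to `σ u * u = σ c * c` with `u = x - σ m` and `c = a - σ m`, that is
`u ^ (q + 1) = c ^ (q + 1)`. For `m ≠ a ^ q` we have `c ≠ 0`, so the solutions are `c` times the
`(q + 1)`-th roots of unity, and there are `q + 1` of these because `q + 1 ∣ q² - 1`.
-/

open Finset Polynomial

theorem IsPrimitiveRoot.card_nthRootsFinset_pow {R : Type*} [CommRing R] [IsDomain R] {ζ : R}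
    {n : ℕ} (h : IsPrimitiveRoot ζ n) {c : R} (hc : c ≠ 0) : #(nthRootsFinset n (c ^ n)) = n := by
  classical
  rw [nthRootsFinset_def, Multiset.toFinset_card_of_nodup (h.nthRoots_nodup (pow_ne_zero n hc)),
    h.card_nthRoots, if_pos ⟨c, rfl⟩]

namespace FiniteField

variable {F : Type*} [Field F] [Fintype F]

theorem exists_isPrimitiveRoot_of_dvd {n : ℕ} (hn : n ∣ Fintype.card F - 1) :
    ∃ ζ : F, IsPrimitiveRoot ζ n := by
  classical
  obtain ⟨g, hg⟩ := IsCyclic.exists_ofOrder_eq_natCard (α := Fˣ)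
  have hg' : IsPrimitiveRoot (g : F) (Fintype.card F - 1) := by
    rw [IsPrimitiveRoot.coe_units_iff, ← Fintype.card_units, ← Nat.card_eq_fintype_card, ← hg]
    exact IsPrimitiveRoot.orderOf g
  obtain ⟨d, hd⟩ := hn
  have hpos : 0 < Fintype.card F - 1 := Nat.sub_pos_of_lt Fintype.one_lt_card
  exact ⟨_, hg'.pow hpos (hd.trans (mul_comm n d))⟩

theorem ncard_setOf_pow_eq_pow {n : ℕ} (hn : n ∣ Fintype.card F - 1) {c : F} (hc : c ≠ 0) :
    {u : F | u ^ n = c ^ n}.ncard = n := by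
  obtain ⟨ζ, hζ⟩ := exists_isPrimitiveRoot_of_dvd hn
  have hn0 : 0 < n := Nat.pos_of_dvd_of_pos hn (Nat.sub_pos_of_lt Fintype.one_lt_card)
  have hset : {u : F | u ^ n = c ^ n} = ↑(nthRootsFinset n (c ^ n)) := by
    ext u
    simp [mem_nthRootsFinset hn0]
  rw [hset, Set.ncard_coe_finset, hζ.card_nthRootsFinset_pow hc]

theorem exists_ringHom_eq_pow_of_card_eq_pow {q n : ℕ} (hq : IsPrimePow q)
    (hF : Fintype.card F = q ^ n) : ∃ σ : F →+* F, ∀ x, σ x = x ^ q := by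
  obtain ⟨r, k, hr, -, rfl⟩ := hq
  have : Fact r.Prime := ⟨hr.nat_prime⟩
  have : CharP F r := charP_of_card_eq_prime_pow (f := k * n) (by rw [hF, pow_mul])
  exact ⟨iterateFrobenius F r k, fun _ => rfl⟩

end FiniteField

theorem norm_sub_trace_on_line {R : Type*} [CommRing R] (σ : R →+* R) {a b m : R}
    (hm : σ (σ m) = m) (hab : σ b + b = σ a * a) (x : R) :
    σ x * x - (σ (b + m * (x - a)) + (b + m * (x - a))) =
      σ (x - σ m) * (x - σ m) - σ (a - σ m) * (a - σ m) := by
  simp only [map_add, map_sub, map_mul, hm]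
  linear_combination -hab

theorem inter_setOf_lines_eq_singleton {R : Type*} [CommRing R] [NoZeroDivisors R] {a b m₁ m₂ : R}
    (hm : m₁ ≠ m₂) :
    {p : R × R | p.2 = b + m₁ * (p.1 - a)} ∩ {p : R × R | p.2 = b + m₂ * (p.1 - a)} = {(a, b)} := by
  ext ⟨x, y⟩
  simp only [Set.mem_inter_iff, Set.mem_ofPred_eq, Set.mem_singleton_iff, Prod.mk.injEq]
  constructor
  · rintro ⟨rfl, h⟩
    have hx : (m₁ - m₂) * (x - a) = 0 := by linear_combination h
    have hxa : x = a := sub_eq_zero.mp ((mul_eq_zero.mp hx).resolve_left (sub_ne_zero.mpr hm))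
    exact ⟨hxa, by rw [hxa, sub_self, mul_zero, add_zero]⟩
  · rintro ⟨rfl, rfl⟩
    simp

theorem ncard_hermitian_inter_line {F : Type*} [Field F] [Fintype F] {q : ℕ} (hq : IsPrimePow q)
    (hF : Fintype.card F = q ^ 2) {a b m : F} (hab : b ^ q + b = a ^ (q + 1)) (hm : m ≠ a ^ q) :
    {p : F × F | p.2 ^ q + p.2 = p.1 ^ (q + 1) ∧ p.2 = b + m * (p.1 - a)}.ncard = q + 1 := by
  obtain ⟨σ, hσ⟩ := FiniteField.exists_ringHom_eq_pow_of_card_eq_pow hq hF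
  have hσσ : ∀ x, σ (σ x) = x := fun x => by
    rw [hσ, hσ, ← pow_mul, ← sq, ← hF, FiniteField.pow_card]
  have hnorm : ∀ x : F, x ^ (q + 1) = σ x * x := fun x => by rw [pow_succ, hσ]
  set c := a - σ m
  have hc : c ≠ 0 := fun h => hm (by rw [← hσσ m, ← sub_eq_zero.mp h, hσ])
  have hline : ∀ x, (b + m * (x - a)) ^ q + (b + m * (x - a)) = x ^ (q + 1) ↔
      (x - σ m) ^ (q + 1) = c ^ (q + 1) := by
    intro x
    have hab' : σ b + b = σ a * a := by rw [hσ, ← hnorm, hab]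
    rw [hnorm, hnorm, hnorm, ← hσ, ← sub_eq_zero (b := σ c * c),
      ← norm_sub_trace_on_line σ (hσσ m) hab' x, sub_eq_zero]
    exact eq_comm
  have hK : {p : F × F | p.2 ^ q + p.2 = p.1 ^ (q + 1) ∧ p.2 = b + m * (p.1 - a)} =
      (fun u => (u + σ m, b + m * (u + σ m - a))) '' {u | u ^ (q + 1) = c ^ (q + 1)} := by
    ext ⟨x, y⟩
    simp only [Set.mem_ofPred_eq, Set.mem_image, Prod.mk.injEq]
    constructor
    · rintro ⟨hx, rfl⟩
      exact ⟨x - σ m, (hline x).mp hx, sub_add_cancel x _, by rw [sub_add_cancel]⟩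
    · rintro ⟨u, hu, rfl, rfl⟩
      exact ⟨(hline _).mpr (by rwa [add_sub_cancel_right]), rfl⟩
  have hdvd : q + 1 ∣ Fintype.card F - 1 := ⟨q - 1, by rw [hF, ← Nat.sq_sub_sq, one_pow]⟩
  rw [hK, Set.ncard_image_of_injective _ fun u v h => add_right_cancel (congrArg Prod.fst h),
    FiniteField.ncard_setOf_pow_eq_pow hdvd hc]

/-- Let `(a, b) ∈ K` and `m ∈ F` with `m ≠ a^q`. Then the set of points of `K` on the line
through `(a, b)` with slope `m` has exactly `q + 1` elements. Moreover, if `m₁ ≠ m₂` are both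
different from `a^q`, then the corresponding two point sets of `K` intersect exactly in
`{(a, b)}`. -/
theorem stmt_11 (q : ℕ) (hq : IsPrimePow q) (F : Type*) [Field F] [Fintype F]
    (hF : Fintype.card F = q ^ 2) (a b : F) (hab : b ^ q + b = a ^ (q + 1)) :
    (∀ m : F, m ≠ a ^ q →
        {p : F × F | p.2 ^ q + p.2 = p.1 ^ (q + 1) ∧ p.2 = b + m * (p.1 - a)}.ncard = q + 1) ∧
      (∀ m₁ m₂ : F, m₁ ≠ m₂ → m₁ ≠ a ^ q → m₂ ≠ a ^ q →
        {p : F × F | p.2 ^ q + p.2 = p.1 ^ (q + 1) ∧ p.2 = b + m₁ * (p.1 - a)}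
            ∩ {p : F × F | p.2 ^ q + p.2 = p.1 ^ (q + 1) ∧ p.2 = b + m₂ * (p.1 - a)}
          = {(a, b)}) := by
  refine ⟨fun m hm => ncard_hermitian_inter_line hq hF hab hm, fun m₁ m₂ hm _ _ => ?_⟩
  rw [Set.ofPred_and, Set.ofPred_and, ← Set.inter_inter_distrib_left,
    inter_setOf_lines_eq_singleton hm]
  exact Set.inter_eq_right.mpr (Set.singleton_subset_iff.mpr hab)
end

section
/- There is an injective group homomorphism from Aut(G,S)* into Aut(L_G(S)) ∩ S_{n−1}; that is, Aut(G,S)* is isomorphic to a subgroup of Aut(L_G(S)) ∩ S_{n−1}. -/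
theorem sum_comp_perm_zsmul_eq_symm {ι G : Type*} [Fintype ι] [AddCommGroup G] (g : ι → G)
    (σ : Equiv.Perm ι) (φ : G ≃+ G) (hφ : ∀ i, φ (g i) = g (σ i)) (x : ι → ℤ) :
    ∑ i, x (σ i) • g i = φ.symm (∑ i, x i • g i) := by
  apply φ.injective
  simp only [AddEquiv.apply_symm_apply, map_sum, map_zsmul, hφ]
  exact Equiv.sum_comp σ fun i => x i • g i

theorem stmt_12_general (G : Type*) [AddCommGroup G] (n : ℕ) [NeZero n]
    (g : Fin n → G) :
    {σ : Equiv.Perm (Fin n) | σ 0 = 0 ∧ ∃ φ : G ≃+ G, ∀ i, φ (g i) = g (σ i)}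
      ⊆ {σ : Equiv.Perm (Fin n) | σ 0 = 0 ∧ ∀ x : Fin n → ℤ,
          ((∑ i, x i = 0) ∧ (∑ i, x i • g i = 0)) →
            ((∑ i, x (σ i) = 0) ∧ (∑ i, x (σ i) • g i = 0))} := by
  rintro σ ⟨hσ0, φ, hφ⟩
  refine ⟨hσ0, fun x ⟨hsum, hrel⟩ => ⟨?_, ?_⟩⟩
  · rw [Equiv.sum_comp σ x, hsum]
  · rw [sum_comp_perm_zsmul_eq_symm g σ φ hφ x, hrel, map_zero]

/-- Let `G` be a finite abelian group, `n ≥ 2`, and `g : Fin n → G` injective with `g 0 = 0`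
(the list of elements of `S`). `Aut(G,S)*` is the group of permutations `σ` of the index set
fixing `0` that extend to automorphisms of `G`, and `Aut(L_G(S)) ∩ S_{n−1}` is the group of
permutations `σ` fixing `0` that map the lattice
`L_G(S) = {x ∈ ℤⁿ : ∑ xᵢ = 0 and ∑ xᵢ gᵢ = 0}` to itself. Then the former group is contained
in the latter (hence is isomorphic to a subgroup of it). -/
theorem stmt_12 (G : Type*) [AddCommGroup G] [Fintype G] (n : ℕ) [NeZero n] (hn : 2 ≤ n)
    (g : Fin n → G) (hginj : Function.Injective g) (hg0 : g 0 = 0) :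
    {σ : Equiv.Perm (Fin n) | σ 0 = 0 ∧ ∃ φ : G ≃+ G, ∀ i, φ (g i) = g (σ i)}
      ⊆ {σ : Equiv.Perm (Fin n) | σ 0 = 0 ∧ ∀ x : Fin n → ℤ,
          ((∑ i, x i = 0) ∧ (∑ i, x i • g i = 0)) →
            ((∑ i, x (σ i) = 0) ∧ (∑ i, x (σ i) • g i = 0))} :=
  stmt_12_general G n g
end

section
/- If S generates G (i.e., the subgroup of G generated by {g_0, g_1, …, g_{n−1}} is all of G), then the groups Aut(G,S)* and Aut(L_G(S)) ∩ S_{n−1} are isomorphic. -/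
/-!
Let `λ_g : ℤⁿ → G` be `x ↦ ∑ xᵢ gᵢ`; it is onto since the `gᵢ` generate `G`. A permutation `σ`
extends to an automorphism exactly when `ker λ_g ≤ ker λ_{g ∘ σ⁻¹}`: an inclusion of kernels
factors `λ_{g ∘ σ⁻¹}` through `λ_g` by an endomorphism of `G` which is onto, hence bijective as
`G` is finite. The lattice only sees the relations with coefficient sum zero, but when `σ`
fixes `0` and `g 0 = 0`, any relation can be corrected by a multiple of `e₀` to have sum zero.
-/

section

variable {ι G : Type*} [AddCommGroup G]

theorem exists_addEquiv_comp_perm_iff_comp_perm_symm (g : ι → G) (σ : Equiv.Perm ι) :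
    (∃ φ : G ≃+ G, ∀ i, φ (g i) = g (σ i)) ↔ ∃ φ : G ≃+ G, ∀ i, φ (g i) = g (σ.symm i) := by
  constructor <;> rintro ⟨φ, hφ⟩ <;>
    exact ⟨φ.symm, fun i => by simp [AddEquiv.symm_apply_eq, hφ]⟩

variable [Fintype ι]

theorem linearCombination_int_surjective {g : ι → G}
    (hg : AddSubgroup.closure (Set.range g) = ⊤) :
    Function.Surjective (Fintype.linearCombination ℤ g) := by
  rw [← LinearMap.range_eq_top, Fintype.range_linearCombination, ← Submodule.toAddSubgroup_inj,
    Submodule.span_int_eq_addSubgroupClosure, hg, Submodule.top_toAddSubgroup]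

theorem linearCombination_comp_perm_symm (g : ι → G) (σ : Equiv.Perm ι) (x : ι → ℤ) :
    Fintype.linearCombination ℤ (fun i => g (σ.symm i)) x = ∑ i, x (σ i) • g i := by
  rw [Fintype.linearCombination_apply, ← Equiv.sum_comp σ]
  simp

theorem exists_addEquiv_iff_ker_le [Finite G] {g g' : ι → G}
    (hg : AddSubgroup.closure (Set.range g) = ⊤)
    (hg' : AddSubgroup.closure (Set.range g') = ⊤) :
    (∃ φ : G ≃+ G, ∀ i, φ (g i) = g' i) ↔
      LinearMap.ker (Fintype.linearCombination ℤ g) ≤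
        LinearMap.ker (Fintype.linearCombination ℤ g') := by
  constructor
  · rintro ⟨φ, hφ⟩ x hx
    have hcomp : Fintype.linearCombination ℤ g' x = φ (Fintype.linearCombination ℤ g x) := by
      simp [Fintype.linearCombination_apply, hφ]
    rw [LinearMap.mem_ker] at hx ⊢
    rw [hcomp, hx, map_zero]
  · intro hker
    let L := (Fintype.linearCombination ℤ g).toAddMonoidHom
    let ψ := L.liftOfSurjective (linearCombination_int_surjective hg)
      ⟨(Fintype.linearCombination ℤ g').toAddMonoidHom, hker⟩
    have hψ (x : ι → ℤ) :
        ψ (Fintype.linearCombination ℤ g x) = Fintype.linearCombination ℤ g' x :=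
      L.liftOfRightInverse_comp_apply _ _ _ x
    have hψ_surj : Function.Surjective ψ := by
      intro y
      obtain ⟨x, rfl⟩ := linearCombination_int_surjective hg' y
      exact ⟨_, hψ x⟩
    refine ⟨AddEquiv.ofBijective ψ ⟨Finite.injective_iff_surjective.mpr hψ_surj, hψ_surj⟩,
      fun i => ?_⟩
    classical
    show ψ (g i) = g' i
    simpa using hψ (Pi.single i 1)

theorem ker_linearCombination_le_of_sum_eq_zero {g g' : ι → G} {i₀ : ι}
    (hg : g i₀ = 0) (hg' : g' i₀ = 0)
    (h : ∀ x : ι → ℤ, ∑ i, x i = 0 → Fintype.linearCombination ℤ g x = 0 →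
      Fintype.linearCombination ℤ g' x = 0) :
    LinearMap.ker (Fintype.linearCombination ℤ g) ≤
      LinearMap.ker (Fintype.linearCombination ℤ g') := by
  classical
  intro x hx
  rw [LinearMap.mem_ker] at hx ⊢
  set y := x - (∑ i, x i) • Pi.single i₀ 1
  have hy_sum : ∑ i, y i = 0 := by
    simp [y, Finset.sum_sub_distrib, Pi.single_apply]
  have hx_eq (v : ι → G) (hv : v i₀ = 0) :
      Fintype.linearCombination ℤ v x = Fintype.linearCombination ℤ v y := by
    simp only [y, map_sub, map_smul, Fintype.linearCombination_apply_single, hv, smul_zero,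
      sub_zero]
  rw [hx_eq g' hg']
  exact h y hy_sum (hx_eq g hg ▸ hx)

end

theorem stmt_13_general (G : Type*) [AddCommGroup G] [Fintype G] (n : ℕ) [NeZero n]
    (g : Fin n → G) (hg0 : g 0 = 0)
    (hgen : AddSubgroup.closure (Set.range g) = ⊤) :
    {σ : Equiv.Perm (Fin n) | σ 0 = 0 ∧ ∃ φ : G ≃+ G, ∀ i, φ (g i) = g (σ i)}
      = {σ : Equiv.Perm (Fin n) | σ 0 = 0 ∧ ∀ x : Fin n → ℤ,
          ((∑ i, x i = 0) ∧ (∑ i, x i • g i = 0)) →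
            ((∑ i, x (σ i) = 0) ∧ (∑ i, x (σ i) • g i = 0))} := by
  ext σ
  refine and_congr_right fun hσ0 => ?_
  have hgen' : AddSubgroup.closure (Set.range fun i => g (σ.symm i)) = ⊤ := by
    rwa [← σ.symm.surjective.range_comp g] at hgen
  rw [exists_addEquiv_comp_perm_iff_comp_perm_symm, exists_addEquiv_iff_ker_le hgen hgen']
  constructor
  · rintro hker x ⟨hsum, hx⟩
    rw [Equiv.sum_comp, ← linearCombination_comp_perm_symm]
    exact ⟨hsum, hker hx⟩
  · intro h
    have hg0' : g (σ.symm 0) = 0 := by rw [← hσ0, Equiv.symm_apply_apply, hg0]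
    exact ker_linearCombination_le_of_sum_eq_zero (g' := fun i => g (σ.symm i)) hg0 hg0'
      fun x hsum hx => (linearCombination_comp_perm_symm g σ x).trans (h x ⟨hsum, hx⟩).2

/-- Let `G` be a finite abelian group, `n ≥ 2`, and `g : Fin n → G` injective with `g 0 = 0`
(the list of elements of `S`). If `S` generates `G`, then the group `Aut(G,S)*` of
permutations of the index set fixing `0` that extend to automorphisms of `G` coincides with
the group `Aut(L_G(S)) ∩ S_{n−1}` of permutations fixing `0` that map the lattice
`L_G(S) = {x ∈ ℤⁿ : ∑ xᵢ = 0 and ∑ xᵢ gᵢ = 0}` to itself; in particular the two groups are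
isomorphic. -/
theorem stmt_13 (G : Type*) [AddCommGroup G] [Fintype G] (n : ℕ) [NeZero n] (hn : 2 ≤ n)
    (g : Fin n → G) (hginj : Function.Injective g) (hg0 : g 0 = 0)
    (hgen : AddSubgroup.closure (Set.range g) = ⊤) :
    {σ : Equiv.Perm (Fin n) | σ 0 = 0 ∧ ∃ φ : G ≃+ G, ∀ i, φ (g i) = g (σ i)}
      = {σ : Equiv.Perm (Fin n) | σ 0 = 0 ∧ ∀ x : Fin n → ℤ,
          ((∑ i, x i = 0) ∧ (∑ i, x i • g i = 0)) →
            ((∑ i, x (σ i) = 0) ∧ (∑ i, x (σ i) • g i = 0))} :=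
  stmt_13_general G n g hg0 hgen
end

section
/- The minimum squared Euclidean norm of a nonzero vector of L is 6 (so the minimal distance of L is √6), and L has exactly 6 minimal vectors, namely (−2, 1, 0, 1), (0, −2, 1, 1), (1, 0, −2, 1) and their negatives. -/
/-!
A vector of squared norm at most 6 has all entries in `[-2, 2]`, so the short vectors of `L` lie
in the box `[-2, 2]⁴`; enumerating its `625` points leaves exactly the six listed vectors,
each of squared norm 6.
-/

open Finset

def minimalVectors : Finset (Fin 4 → ℤ) :=
  {![-2, 1, 0, 1], ![0, -2, 1, 1], ![1, 0, -2, 1],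
    -![-2, 1, 0, 1], -![0, -2, 1, 1], -![1, 0, -2, 1]}

abbrev InLattice (x : Fin 4 → ℤ) : Prop :=
  (∑ i, x i = 0) ∧ (7 : ℤ) ∣ (x 0 + 2 * x 1 + 4 * x 2)

theorem mem_Icc_of_sum_sq_lt {ι : Type*} [Fintype ι] {x : ι → ℤ} {r : ℤ} (hr : 0 ≤ r)
    (h : ∑ j, x j ^ 2 < (r + 1) ^ 2) (i : ι) : x i ∈ Icc (-r) r := by
  have hi : x i ^ 2 ≤ ∑ j, x j ^ 2 :=
    single_le_sum (fun j _ => sq_nonneg (x j)) (mem_univ i)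
  obtain ⟨hlo, hhi⟩ := abs_lt_of_sq_lt_sq' (hi.trans_lt h) (by omega)
  rw [mem_Icc]
  omega

theorem filter_sum_sq_le_six_eq_minimalVectors :
    {x ∈ Fintype.piFinset fun _ : Fin 4 => Icc (-2 : ℤ) 2 |
      InLattice x ∧ x ≠ 0 ∧ ∑ i, x i ^ 2 ≤ 6} = minimalVectors := by
  decide

theorem sum_sq_eq_six_of_mem_minimalVectors {x : Fin 4 → ℤ} (hx : x ∈ minimalVectors) :
    ∑ i, x i ^ 2 = 6 := by
  revert x
  decide

theorem mem_minimalVectors_iff_sum_sq_le {x : Fin 4 → ℤ} :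
    x ∈ minimalVectors ↔ InLattice x ∧ x ≠ 0 ∧ ∑ i, x i ^ 2 ≤ 6 := by
  rw [← filter_sum_sq_le_six_eq_minimalVectors, mem_filter, Fintype.mem_piFinset]
  refine ⟨And.right, fun h => ⟨mem_Icc_of_sum_sq_lt (by norm_num) ?_, h⟩⟩
  linarith [h.2.2]

theorem six_le_sum_sq {x : Fin 4 → ℤ} (hx : InLattice x) (hne : x ≠ 0) : 6 ≤ ∑ i, x i ^ 2 := by
  by_contra! hlt
  have h6 := sum_sq_eq_six_of_mem_minimalVectors
    (mem_minimalVectors_iff_sum_sq_le.2 ⟨hx, hne, hlt.le⟩)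
  omega

theorem mem_minimalVectors_iff {x : Fin 4 → ℤ} :
    x ∈ minimalVectors ↔ InLattice x ∧ x ≠ 0 ∧ ∑ i, x i ^ 2 = 6 := by
  refine ⟨fun h => ?_, fun ⟨hx, hne, h6⟩ => mem_minimalVectors_iff_sum_sq_le.2 ⟨hx, hne, h6.le⟩⟩
  obtain ⟨hx, hne, -⟩ := mem_minimalVectors_iff_sum_sq_le.1 h
  exact ⟨hx, hne, sum_sq_eq_six_of_mem_minimalVectors h⟩

/-- For the lattice `L = {x ∈ ℤ⁴ : x₁+x₂+x₃+x₄ = 0, x₁+2x₂+4x₃ ≡ 0 (mod 7)}`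
(the lattice `L_{ℤ₇}(S)` for `S = {0,1,2,4} ⊆ ℤ/7ℤ`), the minimum squared Euclidean norm of a
nonzero vector is `6`, and `L` has exactly `6` minimal vectors, namely `(−2,1,0,1)`,
`(0,−2,1,1)`, `(1,0,−2,1)` and their negatives. -/
theorem stmt_14 :
    (∀ x : Fin 4 → ℤ,
        ((∑ i, x i = 0) ∧ (7 : ℤ) ∣ (x 0 + 2 * x 1 + 4 * x 2)) → x ≠ 0 →
          6 ≤ ∑ i, (x i) ^ 2) ∧
      {x : Fin 4 → ℤ |
          ((∑ i, x i = 0) ∧ (7 : ℤ) ∣ (x 0 + 2 * x 1 + 4 * x 2)) ∧ x ≠ 0 ∧ ∑ i, (x i) ^ 2 = 6}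
        = {![-2, 1, 0, 1], ![0, -2, 1, 1], ![1, 0, -2, 1],
            -![-2, 1, 0, 1], -![0, -2, 1, 1], -![1, 0, -2, 1]} ∧
      {x : Fin 4 → ℤ |
          ((∑ i, x i = 0) ∧ (7 : ℤ) ∣ (x 0 + 2 * x 1 + 4 * x 2)) ∧ x ≠ 0 ∧ ∑ i, (x i) ^ 2 = 6}.ncard
        = 6 := by
  have hset : {x : Fin 4 → ℤ | InLattice x ∧ x ≠ 0 ∧ ∑ i, x i ^ 2 = 6} = ↑minimalVectors :=
    Set.ext fun _ => mem_minimalVectors_iff.symm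
  refine ⟨fun _ => six_le_sum_sq, ?_, ?_⟩
  · rw [hset, minimalVectors]
    push_cast
    rfl
  · rw [hset, Set.ncard_coe_finset]
    rfl
end

section
/- The three vectors (−2, 1, 0, 1), (0, −2, 1, 1), (1, 0, −2, 1) are minimal vectors of L and are linearly independent over ℚ; hence L, which has rank 3, is well-rounded. -/
/-!
A nonzero vector of `ℤ⁴` with coordinate sum `0` and norm below `6` has all coordinates in
`[-2, 2]`, and is in fact `±(eᵢ - eⱼ)` or `±(eᵢ + eⱼ - eₖ - eₗ)`. The congruence asks that the
weights `1, 2, 4, 0` of the coordinates satisfy the same relation mod `7`, which fails because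
they are distinct and so are their pairwise sums. Hence the minimal norm of `L` is `6`, attained
by the three given vectors. They are independent, and `L` lies in the hyperplane of coordinate
sum `0`, so its rank is `3`.
-/

open Module Submodule

def latticeS : Set (Fin 4 → ℤ) :=
  {x | (∑ i, x i = 0) ∧ (7 : ℤ) ∣ (x 0 + 2 * x 1 + 4 * x 2)}

lemma eq_zero_of_sum_sq_lt_six {a b c : ℤ} (h7 : 7 ∣ a + 2 * b + 4 * c)
    (hlt : a ^ 2 + b ^ 2 + c ^ 2 + (a + b + c) ^ 2 < 6) : a = 0 ∧ b = 0 ∧ c = 0 := by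
  have hbox (t : ℤ) (ht : t ^ 2 < 6) : -2 ≤ t ∧ t ≤ 2 := ⟨by nlinarith, by nlinarith⟩
  obtain ⟨ha₁, ha₂⟩ := hbox a (by linarith [sq_nonneg b, sq_nonneg c, sq_nonneg (a + b + c)])
  obtain ⟨hb₁, hb₂⟩ := hbox b (by linarith [sq_nonneg a, sq_nonneg c, sq_nonneg (a + b + c)])
  obtain ⟨hc₁, hc₂⟩ := hbox c (by linarith [sq_nonneg a, sq_nonneg b, sq_nonneg (a + b + c)])
  interval_cases a <;> interval_cases b <;> interval_cases c <;> revert h7 hlt <;> decide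

lemma six_le_sum_sq_of_mem_latticeS {x : Fin 4 → ℤ} (hx : x ∈ latticeS) (hx0 : x ≠ 0) :
    6 ≤ ∑ i, x i ^ 2 := by
  obtain ⟨hsum, h7⟩ := hx
  rw [Fin.sum_univ_four] at hsum ⊢
  have h3 : x 3 = -(x 0 + x 1 + x 2) := by omega
  by_contra! hlt
  rw [h3, neg_sq] at hlt
  obtain ⟨h0, h1, h2⟩ := eq_zero_of_sum_sq_lt_six h7 hlt
  exact hx0 (funext fun i => by fin_cases i <;> simp [h0, h1, h2, h3])

lemma linearIndependent_minimal_vectors :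
    LinearIndependent ℚ ![![(-2 : ℚ), 1, 0, 1], ![0, -2, 1, 1], ![1, 0, -2, 1]] := by
  rw [Fintype.linearIndependent_iff]
  intro g hg
  have h0 := congrFun hg 0
  have h1 := congrFun hg 1
  have h2 := congrFun hg 2
  simp only [Fin.sum_univ_three, Finset.sum_apply, Pi.smul_apply, Matrix.cons_val,
    smul_eq_mul, Pi.zero_apply] at h0 h1 h2
  have hg₂ : g 2 = 0 := by linarith
  have hg₁ : g 1 = 0 := by linarith
  have hg₀ : g 0 = 0 := by linarith
  intro i
  fin_cases i
  exacts [hg₀, hg₁, hg₂]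

lemma finrank_span_add_one_le_of_sum_eq_zero {K ι : Type*} [Field K] [Fintype ι] [Nonempty ι]
    {s : Set (ι → K)} (hs : ∀ x ∈ s, ∑ i, x i = 0) :
    finrank K (span K s) + 1 ≤ Fintype.card ι := by
  classical
  let f : Dual K (ι → K) := Fintype.linearCombination K fun _ => (1 : K)
  have hf (x : ι → K) : f x = ∑ i, x i := by simp [f, Fintype.linearCombination_apply]
  have hf0 : f ≠ 0 := fun h => by
    simpa [hf] using LinearMap.congr_fun h (Pi.single (Classical.arbitrary ι) 1)
  have hle : span K s ≤ LinearMap.ker f :=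
    span_le.mpr fun x hx => by simpa [hf] using hs x hx
  rw [← finrank_fintype_fun_eq_card (R := K), ← Dual.finrank_ker_add_one_of_ne_zero hf0]
  exact Nat.add_le_add_right (finrank_mono hle) 1

lemma card_le_finrank_span_of_range_subset {K V ι : Type*} [Field K] [AddCommGroup V]
    [Module K V] [FiniteDimensional K V] [Fintype ι] {v : ι → V} (hv : LinearIndependent K v)
    {s : Set V} (hs : Set.range v ⊆ s) : Fintype.card ι ≤ finrank K (span K s) :=
  (finrank_span_eq_card hv).symm.le.trans (finrank_mono (span_mono hs))

/-- For the lattice `L = {x ∈ ℤ⁴ : x₁+x₂+x₃+x₄ = 0, x₁+2x₂+4x₃ ≡ 0 (mod 7)}`, the three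
vectors `(−2,1,0,1)`, `(0,−2,1,1)`, `(1,0,−2,1)` are minimal vectors of `L` (nonzero vectors
of `L` of least Euclidean norm) and are linearly independent over `ℚ`; moreover `L` has
rank `3` (so `L` is well-rounded). -/
theorem stmt_15 :
    (∀ v ∈ ({![(-2 : ℤ), 1, 0, 1], ![0, -2, 1, 1], ![1, 0, -2, 1]} : Set (Fin 4 → ℤ)),
        ((∑ i, v i = 0) ∧ (7 : ℤ) ∣ (v 0 + 2 * v 1 + 4 * v 2)) ∧ v ≠ 0 ∧
          ∀ x : Fin 4 → ℤ,
            ((∑ i, x i = 0) ∧ (7 : ℤ) ∣ (x 0 + 2 * x 1 + 4 * x 2)) → x ≠ 0 →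
              ∑ i, (v i) ^ 2 ≤ ∑ i, (x i) ^ 2) ∧
      LinearIndependent ℚ (![![(-2 : ℚ), 1, 0, 1], ![0, -2, 1, 1], ![1, 0, -2, 1]]) ∧
      Module.finrank ℚ (Submodule.span ℚ ((fun x : Fin 4 → ℤ => fun i => (x i : ℚ)) ''
          {x : Fin 4 → ℤ | (∑ i, x i = 0) ∧ (7 : ℤ) ∣ (x 0 + 2 * x 1 + 4 * x 2)})) = 3 := by
  refine ⟨?minimal, linearIndependent_minimal_vectors, ?rank⟩
  case minimal =>
    rintro v (rfl | rfl | rfl) <;>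
      exact ⟨by decide, by decide, fun x hx hx0 =>
        (six_le_sum_sq_of_mem_latticeS hx hx0).trans' (by decide)⟩
  case rank =>
    refine le_antisymm ?_ ?_
    · refine Nat.le_of_add_le_add_right (finrank_span_add_one_le_of_sum_eq_zero ?_)
      rintro _ ⟨x, ⟨hsum, -⟩, rfl⟩
      simpa using congrArg (Int.cast : ℤ → ℚ) hsum
    · refine card_le_finrank_span_of_range_subset linearIndependent_minimal_vectors ?_
      rintro _ ⟨i, rfl⟩
      fin_cases i
      exacts [⟨![-2, 1, 0, 1], by decide, by decide⟩, ⟨![0, -2, 1, 1], by decide, by decide⟩,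
        ⟨![1, 0, -2, 1], by decide, by decide⟩]
end
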